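/- arXiv:2407.04914 — 8 statements merged into one kernel-verified Lean document; each statement's English description precedes it below -/
import Mathlib

section
/- Let A be a symmetric positive definite n×n real matrix with smallest eigenvalue μ > 0 and largest eigenvalue L. Then for every nonzero vector g ∈ ℝⁿ, (gᵀg)² / ((gᵀAg)(gᵀA⁻¹g)) ≥ 4μL/(L+μ)² (Kantorovich inequality). -/
/-!
Diagonalising `A` by an orthogonal matrix writes `gᵀg`, `gᵀAg` and `gᵀA⁻¹g` as `S = ∑ wᵢ`,
`P = ∑ λᵢ wᵢ` and `Q = ∑ λᵢ⁻¹ wᵢ` with weights `wᵢ ≥ 0` and eigenvalues `λᵢ ∈ [μ, L]`.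
On `[μ, L]` we have `(λ - μ)(L - λ) ≥ 0`, i.e. `λ + μL/λ ≤ μ + L`, so `P + μLQ ≤ (μ + L)S`;
AM-GM in the form `4 · P · μLQ ≤ (P + μLQ)²` then gives `4μL · PQ ≤ (μ + L)² S²`.
-/

open Matrix Finset

theorem add_mul_mul_inv_le_add {m M x : ℝ} (hm : 0 < m) (hx : x ∈ Set.Icc m M) :
    x + m * M * x⁻¹ ≤ m + M := by
  obtain ⟨hmx, hxM⟩ := hx
  have hx0 : 0 < x := hm.trans_le hmx
  have hgap : m + M - (x + m * M * x⁻¹) = (x - m) * (M - x) * x⁻¹ := by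
    field_simp
    ring
  have : 0 ≤ (x - m) * (M - x) * x⁻¹ :=
    mul_nonneg (mul_nonneg (by linarith) (by linarith)) (inv_nonneg.2 hx0.le)
  linarith

theorem Finset.kantorovich {ι : Type*} (s : Finset ι) {m M : ℝ} (hm : 0 < m) {w x : ι → ℝ}
    (hw : ∀ i ∈ s, 0 ≤ w i) (hx : ∀ i ∈ s, x i ∈ Set.Icc m M) :
    4 * m * M * ((∑ i ∈ s, x i * w i) * ∑ i ∈ s, (x i)⁻¹ * w i) ≤
      (M + m) ^ 2 * (∑ i ∈ s, w i) ^ 2 := by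
  set P := ∑ i ∈ s, x i * w i
  set Q := ∑ i ∈ s, (x i)⁻¹ * w i
  have hsum : P + m * M * Q ≤ (M + m) * ∑ i ∈ s, w i := by
    rw [mul_sum, mul_sum, ← sum_add_distrib]
    refine sum_le_sum fun i hi => ?_
    have := mul_le_mul_of_nonneg_right (add_mul_mul_inv_le_add hm (hx i hi)) (hw i hi)
    linarith
  have hnonneg : 0 ≤ P + m * M * Q := by
    rw [mul_sum, ← sum_add_distrib]
    refine sum_nonneg fun i hi => ?_
    have hxi : 0 < x i := hm.trans_le (hx i hi).1
    have hM : 0 < M := hxi.trans_le (hx i hi).2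
    have := hw i hi
    positivity
  calc 4 * m * M * (P * Q) = 4 * P * (m * M * Q) := by ring
    _ ≤ (P + m * M * Q) ^ 2 := four_mul_le_sq_add _ _
    _ ≤ ((M + m) * ∑ i ∈ s, w i) ^ 2 := pow_le_pow_left₀ hnonneg hsum 2
    _ = (M + m) ^ 2 * (∑ i ∈ s, w i) ^ 2 := mul_pow _ _ _

theorem Matrix.IsHermitian.dotProduct_cfc_mulVec {n : Type*} [Fintype n] [DecidableEq n]
    {A : Matrix n n ℝ} (hA : A.IsHermitian) (f : ℝ → ℝ) (x : n → ℝ) :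
    x ⬝ᵥ cfc f A *ᵥ x =
      ∑ i, f (hA.eigenvalues i) * (star (hA.eigenvectorUnitary : Matrix n n ℝ) *ᵥ x) i ^ 2 := by
  rw [hA.cfc_eq, IsHermitian.cfc, Unitary.conjStarAlgAut_apply, ← mulVec_mulVec, ← mulVec_mulVec,
    dotProduct_mulVec, ← mulVec_transpose, ← conjTranspose_eq_transpose_of_trivial,
    ← star_eq_conjTranspose, dotProduct]
  refine sum_congr rfl fun i _ => ?_
  simp only [mulVec_diagonal, Function.comp_apply, RCLike.ofReal_real_eq_id, id]
  ring

theorem stmt_0_general {n : ℕ} (A : Matrix (Fin n) (Fin n) ℝ) (hA : A.PosDef)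
    (μ L : ℝ) (hμpos : 0 < μ)
    (hbd : ∀ i, μ ≤ hA.1.eigenvalues i ∧ hA.1.eigenvalues i ≤ L)
    (g : Fin n → ℝ) (hg : g ≠ 0) :
    4 * μ * L / (L + μ) ^ 2 ≤
      (g ⬝ᵥ g) ^ 2 / ((g ⬝ᵥ A.mulVec g) * (g ⬝ᵥ A⁻¹.mulVec g)) := by
  set c := star (hA.1.eigenvectorUnitary : Matrix (Fin n) (Fin n) ℝ) *ᵥ g
  have hgg : g ⬝ᵥ g = ∑ i, c i ^ 2 := by
    simpa only [cfc_const_one ℝ A hA.1.isSelfAdjoint, one_mulVec, one_mul] using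
      hA.1.dotProduct_cfc_mulVec (fun _ => 1) g
  have hAg : g ⬝ᵥ A *ᵥ g = ∑ i, hA.1.eigenvalues i * c i ^ 2 := by
    simpa only [cfc_id' ℝ A hA.1.isSelfAdjoint] using hA.1.dotProduct_cfc_mulVec (fun x => x) g
  have hAinvg : g ⬝ᵥ A⁻¹ *ᵥ g = ∑ i, (hA.1.eigenvalues i)⁻¹ * c i ^ 2 := by
    rw [nonsing_inv_eq_ringInverse, ← cfc_ringInverse_id (R := ℝ) A hA.isUnit hA.1.isSelfAdjoint]
    exact hA.1.dotProduct_cfc_mulVec (·⁻¹) g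
  have hAg_pos : 0 < g ⬝ᵥ A *ᵥ g := by simpa using hA.dotProduct_mulVec_pos hg
  have hAinvg_pos : 0 < g ⬝ᵥ A⁻¹ *ᵥ g := by simpa using hA.inv.dotProduct_mulVec_pos hg
  have hLμ_pos : 0 < L + μ := by
    obtain ⟨i, -⟩ := Function.ne_iff.1 hg
    linarith [hbd i]
  rw [div_le_div_iff₀ (by positivity) (mul_pos hAg_pos hAinvg_pos), hgg, hAg, hAinvg]
  linear_combination univ.kantorovich hμpos (fun i _ => sq_nonneg (c i)) fun i _ => hbd i

/-- Kantorovich inequality for a symmetric positive definite matrix with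
eigenvalues in `[μ, L]`, `μ` the smallest and `L` the largest eigenvalue. -/
theorem stmt_0 {n : ℕ} (A : Matrix (Fin n) (Fin n) ℝ) (hA : A.PosDef)
    (μ L : ℝ) (hμpos : 0 < μ)
    (hμ : ∃ i, hA.1.eigenvalues i = μ)
    (hL : ∃ i, hA.1.eigenvalues i = L)
    (hbd : ∀ i, μ ≤ hA.1.eigenvalues i ∧ hA.1.eigenvalues i ≤ L)
    (g : Fin n → ℝ) (hg : g ≠ 0) :
    4 * μ * L / (L + μ) ^ 2 ≤
      (g ⬝ᵥ g) ^ 2 / ((g ⬝ᵥ A.mulVec g) * (g ⬝ᵥ A⁻¹.mulVec g)) :=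
  stmt_0_general A hA μ L hμpos hbd g hg
end

section
/- Let A = diag(λ₁,...,λₙ) with 0 < μ = λ₁ ≤ ... ≤ λₙ = L, let f(x) = ½xᵀAx - bᵀx with minimizer x* = A⁻¹b, and let ψ be a function with ψ(λᵢ) > 0 for all i. Given x_k with gradient g_k = Ax_k - b ≠ 0, define the stepsize α_k = γ (g_kᵀψ(A)g_k)/(g_kᵀψ(A)Ag_k) with γ ∈ (0,1], and set x_{k+1} = x_k - α_k g_k. Then ‖x_{k+1} - x*‖²_{ψ(A)A} ≤ (1 - 4γ(2-γ)μL/(L+μ)²) ‖x_k - x*‖²_{ψ(A)A}, where ‖y‖²_D = yᵀDy. -/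
/-!
Both the error and the gradient are diagonal, so with `e = x_k - x*` and the weights
`w i = ψ(λᵢ) λᵢ eᵢ²` one step multiplies each weight by `(1 - α λᵢ)²`. Writing
`S₀ = ∑ w`, `S₁ = ∑ w λ`, `S₂ = ∑ w λ²`, the chosen stepsize is `α = γ S₁ / S₂` and the new
weighted error is `S₀ - γ (2 - γ) S₁² / S₂`. The Kantorovich inequality
`4 μ L S₀ S₂ ≤ (L + μ)² S₁²`, which follows from `(λ - μ)(L - λ) ≥ 0`, finishes the proof.
-/

open Matrix Finset

section WeightedSums

variable {ι : Type*} [Fintype ι]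

theorem dotProduct_diagonal_mulVec_self {R : Type*} [CommSemiring R] [DecidableEq ι]
    (w x : ι → R) :
    x ⬝ᵥ diagonal w *ᵥ x = ∑ i, w i * x i ^ 2 := by
  simp only [dotProduct, mulVec_diagonal]
  exact sum_congr rfl fun i _ => by ring

theorem kantorovich_sum {w d : ι → ℝ} {μ L : ℝ} (hμ : 0 ≤ μ) (hw : ∀ i, 0 ≤ w i)
    (hd : ∀ i, μ ≤ d i ∧ d i ≤ L) :
    4 * μ * L * (∑ i, w i) * (∑ i, w i * d i ^ 2) ≤ (L + μ) ^ 2 * (∑ i, w i * d i) ^ 2 := by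
  have hsecond : ∑ i, w i * d i ^ 2 ≤ (μ + L) * ∑ i, w i * d i - μ * L * ∑ i, w i := by
    rw [mul_sum, mul_sum, ← sum_sub_distrib]
    refine sum_le_sum fun i _ => ?_
    nlinarith [mul_nonneg (hw i) (mul_nonneg (sub_nonneg.2 (hd i).1) (sub_nonneg.2 (hd i).2))]
  have hfirst : 0 ≤ μ * L * ∑ i, w i := by
    rw [mul_sum]
    exact sum_nonneg fun i _ =>
      mul_nonneg (mul_nonneg hμ (hμ.trans ((hd i).1.trans (hd i).2))) (hw i)
  nlinarith [mul_le_mul_of_nonneg_left hsecond hfirst,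
    sq_nonneg ((L + μ) * ∑ i, w i * d i - 2 * μ * L * ∑ i, w i)]

theorem sum_mul_one_sub_mul_sq_le {w d : ι → ℝ} {μ L γ : ℝ} (hμ : 0 < μ) (hw : ∀ i, 0 ≤ w i)
    (hd : ∀ i, μ ≤ d i ∧ d i ≤ L) (hγ : 0 ≤ γ) (hγ2 : γ ≤ 2) :
    ∑ i, w i * (1 - γ * (∑ j, w j * d j) / (∑ j, w j * d j ^ 2) * d i) ^ 2 ≤
      (1 - 4 * γ * (2 - γ) * μ * L / (L + μ) ^ 2) * ∑ i, w i := by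
  set S₀ := ∑ i, w i
  set S₁ := ∑ i, w i * d i
  set S₂ := ∑ i, w i * d i ^ 2
  have hdpos : ∀ i, 0 < d i := fun i => hμ.trans_le (hd i).1
  rcases (sum_nonneg fun i _ => mul_nonneg (hw i) (sq_nonneg (d i)) : 0 ≤ S₂).eq_or_lt
    with hS₂ | hS₂
  -- `S₂ = 0` forces `w = 0` since `d > 0`, so the junk stepsize `γ S₁ / 0 = 0` is harmless.
  · have hw0 : ∀ i, w i = 0 := fun i => by
      have := (sum_eq_zero_iff_of_nonneg fun i _ => mul_nonneg (hw i) (sq_nonneg (d i))).1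
        hS₂.symm i (mem_univ i)
      simpa [(hdpos i).ne'] using this
    simp [S₀, hw0]
  obtain ⟨i, -, -⟩ := exists_ne_zero_of_sum_ne_zero hS₂.ne'
  have hLμ : 0 < (L + μ) ^ 2 := by nlinarith [hd i]
  have hexpand : ∑ i, w i * (1 - γ * S₁ / S₂ * d i) ^ 2 = S₀ - γ * (2 - γ) * (S₁ ^ 2 / S₂) := by
    have hquadratic : ∑ i, w i * (1 - γ * S₁ / S₂ * d i) ^ 2
        = S₀ - 2 * (γ * S₁ / S₂) * S₁ + (γ * S₁ / S₂) ^ 2 * S₂ := by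
      simp only [S₀, S₁, S₂, mul_sum, ← sum_sub_distrib, ← sum_add_distrib]
      exact sum_congr rfl fun i _ => by ring
    rw [hquadratic]
    field_simp
    ring
  have hratio : 4 * μ * L / (L + μ) ^ 2 * S₀ ≤ S₁ ^ 2 / S₂ := by
    rw [div_mul_eq_mul_div, div_le_div_iff₀ hLμ hS₂]
    linarith [kantorovich_sum hμ.le hw hd]
  have hrate : 4 * γ * (2 - γ) * μ * L / (L + μ) ^ 2 =
      γ * (2 - γ) * (4 * μ * L / (L + μ) ^ 2) := by
    ring
  rw [hexpand, hrate]
  linarith [mul_le_mul_of_nonneg_left hratio (mul_nonneg hγ (by linarith : 0 ≤ 2 - γ))]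

end WeightedSums

theorem stmt_1_general {n : ℕ} (d : Fin n → ℝ) (μ L γ : ℝ)
    (hμpos : 0 < μ) (hbd : ∀ i, μ ≤ d i ∧ d i ≤ L)
    (ψ : ℝ → ℝ) (hψ : ∀ i, 0 < ψ (d i))
    (hγ : 0 < γ) (hγ1 : γ ≤ 1)
    (b xk xs : Fin n → ℝ)
    (A : Matrix (Fin n) (Fin n) ℝ) (hA : A = Matrix.diagonal d)
    (hxs : A.mulVec xs = b)
    (gk : Fin n → ℝ) (hgk : gk = A.mulVec xk - b)
    (ψA : Matrix (Fin n) (Fin n) ℝ)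
    (hψA : ψA = Matrix.diagonal (fun i => ψ (d i)))
    (αk : ℝ) (hαk : αk = γ * (gk ⬝ᵥ ψA.mulVec gk) / (gk ⬝ᵥ (ψA * A).mulVec gk))
    (xk1 : Fin n → ℝ) (hxk1 : xk1 = xk - αk • gk) :
    (xk1 - xs) ⬝ᵥ (ψA * A).mulVec (xk1 - xs) ≤
      (1 - 4 * γ * (2 - γ) * μ * L / (L + μ) ^ 2) *
        ((xk - xs) ⬝ᵥ (ψA * A).mulVec (xk - xs)) := by
  set e := xk - xs
  set w : Fin n → ℝ := fun i => ψ (d i) * d i * e i ^ 2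
  have hψAA : ψA * A = diagonal fun i => ψ (d i) * d i := by
    rw [hψA, hA, diagonal_mul_diagonal]
  have hgrad : gk = fun i => d i * e i := by
    subst hgk hxs hA
    ext i
    simp [e, mulVec_diagonal, mul_sub]
  have hnext : xk1 - xs = fun i => e i * (1 - αk * d i) := by
    ext i
    simp only [hxk1, hgrad, Pi.sub_apply, Pi.smul_apply, smul_eq_mul, e]
    ring
  have hstep : αk = γ * (∑ i, w i * d i) / ∑ i, w i * d i ^ 2 := by
    rw [hαk, hψAA, hψA, dotProduct_diagonal_mulVec_self, dotProduct_diagonal_mulVec_self, hgrad]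
    congr 1
    · congr 1
      exact sum_congr rfl fun i _ => by ring
    · exact sum_congr rfl fun i _ => by ring
  have hlhs : (xk1 - xs) ⬝ᵥ (ψA * A) *ᵥ (xk1 - xs) = ∑ i, w i * (1 - αk * d i) ^ 2 := by
    rw [hnext, hψAA, dotProduct_diagonal_mulVec_self]
    exact sum_congr rfl fun i _ => by ring
  rw [hlhs, hψAA, dotProduct_diagonal_mulVec_self, hstep]
  have hw : ∀ i, 0 ≤ w i := fun i =>
    mul_nonneg (mul_nonneg (hψ i).le (hμpos.trans_le (hbd i).1).le) (sq_nonneg (e i))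
  exact sum_mul_one_sub_mul_sq_le hμpos hw hbd hγ.le (by linarith)

/-- Linear convergence of the family of gradient methods with stepsize
`α_k = γ (g_kᵀψ(A)g_k)/(g_kᵀψ(A)Ag_k)` on a strongly convex quadratic with
diagonal Hessian whose eigenvalues lie in `[μ, L]` with both extremes attained. -/
theorem stmt_1 {n : ℕ} (d : Fin n → ℝ) (μ L γ : ℝ)
    (hμpos : 0 < μ) (hbd : ∀ i, μ ≤ d i ∧ d i ≤ L)
    (hμatt : ∃ i, d i = μ) (hLatt : ∃ i, d i = L)
    (ψ : ℝ → ℝ) (hψ : ∀ i, 0 < ψ (d i))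
    (hγ : 0 < γ) (hγ1 : γ ≤ 1)
    (b xk xs : Fin n → ℝ)
    (A : Matrix (Fin n) (Fin n) ℝ) (hA : A = Matrix.diagonal d)
    (hxs : A.mulVec xs = b)
    (gk : Fin n → ℝ) (hgk : gk = A.mulVec xk - b) (hgk0 : gk ≠ 0)
    (ψA : Matrix (Fin n) (Fin n) ℝ)
    (hψA : ψA = Matrix.diagonal (fun i => ψ (d i)))
    (αk : ℝ) (hαk : αk = γ * (gk ⬝ᵥ ψA.mulVec gk) / (gk ⬝ᵥ (ψA * A).mulVec gk))
    (xk1 : Fin n → ℝ) (hxk1 : xk1 = xk - αk • gk) :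
    (xk1 - xs) ⬝ᵥ (ψA * A).mulVec (xk1 - xs) ≤
      (1 - 4 * γ * (2 - γ) * μ * L / (L + μ) ^ 2) *
        ((xk - xs) ⬝ᵥ (ψA * A).mulVec (xk - xs)) :=
  stmt_1_general d μ L γ hμpos hbd ψ hψ hγ hγ1 b xk xs A hA hxs gk hgk ψA hψA αk hαk xk1 hxk1
end

section
/- Under the setup of the family of gradient methods with stepsize α_k = γ (g_kᵀψ(A)g_k)/(g_kᵀψ(A)Ag_k), if g_k = (1/√2) ψ(A)^{-1/2}(ξ₁ ± ξₙ) where ξ₁, ξₙ are unit eigenvectors of A for eigenvalues μ and L respectively, then equality holds: ‖x_{k+1} - x*‖²_{ψ(A)A} = (1 - 4γ(2-γ)μL/(L+μ)²) ‖x_k - x*‖²_{ψ(A)A}. -/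
open Matrix

/-!
With `e = x_k - x*` we have `A e = g_k`, so for `P = ψ(A)` (diagonal, hence `P A` symmetric)
`‖e - α g‖²_{PA} = ‖e‖²_{PA} - 2α gᵀPg + α² gᵀPAg`. The gradient `ψ(A)^{-1/2}(ξ₁ ± ξₙ)/√2` gives
every diagonal form `gᵀ ψ(A) u(A) g` the value `(u(μ) + u(L))/2`; with `u = 1, λ, λ⁻¹` this yields
`gᵀPg = 1`, `gᵀPAg = (μ + L)/2` and `‖e‖²_{PA} = (1/μ + 1/L)/2`, so `α = 2γ/(L + μ)` and the
contraction factor is exactly `1 - 4γ(2 - γ)μL/(L + μ)²`.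
-/

theorem Matrix.IsSymm.dotProduct_mulVec_comm {R ι : Type*} [CommSemiring R] [Fintype ι]
    {M : Matrix ι ι R} (hM : M.IsSymm) (v w : ι → R) : v ⬝ᵥ M *ᵥ w = w ⬝ᵥ M *ᵥ v := by
  rw [dotProduct_mulVec, ← mulVec_transpose, hM.eq, dotProduct_comm]

theorem dotProduct_mul_mulVec_sub_smul {R ι : Type*} [CommRing R] [Fintype ι]
    {P A : Matrix ι ι R} (hPA : (P * A).IsSymm) {e g : ι → R} (he : A *ᵥ e = g) (α : R) :
    (e - α • g) ⬝ᵥ (P * A) *ᵥ (e - α • g) =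
      e ⬝ᵥ (P * A) *ᵥ e - 2 * α * (g ⬝ᵥ P *ᵥ g) + α ^ 2 * (g ⬝ᵥ (P * A) *ᵥ g) := by
  have hPAe : (P * A) *ᵥ e = P *ᵥ g := by rw [← mulVec_mulVec, he]
  have hcross : e ⬝ᵥ (P * A) *ᵥ g = g ⬝ᵥ P *ᵥ g := by
    rw [hPA.dotProduct_mulVec_comm, hPAe]
  simp only [mulVec_sub, mulVec_smul, sub_dotProduct, dotProduct_sub, smul_dotProduct,
    dotProduct_smul, smul_eq_mul, hcross]
  rw [hPAe]
  ring

theorem dotProduct_diagonal_mul_diagonal_mulVec_of_diagonal_mulVec_eq {K ι : Type*} [Field K]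
    [Fintype ι] [DecidableEq ι] (p : ι → K) {d : ι → K} (hd : ∀ k, d k ≠ 0) {e g : ι → K}
    (he : diagonal d *ᵥ e = g) :
    e ⬝ᵥ (diagonal p * diagonal d) *ᵥ e = g ⬝ᵥ diagonal (fun k => p k * (d k)⁻¹) *ᵥ g := by
  subst he
  simp only [diagonal_mul_diagonal, dotProduct, mulVec_diagonal]
  refine Finset.sum_congr rfl fun k _ => ?_
  field_simp [hd k]

theorem single_add_single_dotProduct_diagonal_mulVec {R ι : Type*} [CommSemiring R] [Fintype ι]
    [DecidableEq ι] (w : ι → R) {i j : ι} (hij : i ≠ j) (a b : R) :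
    (Pi.single i a + Pi.single j b) ⬝ᵥ diagonal w *ᵥ (Pi.single i a + Pi.single j b) =
      w i * a ^ 2 + w j * b ^ 2 := by
  rw [mulVec_add, diagonal_mulVec_single, diagonal_mulVec_single, dotProduct_add,
    dotProduct_single, dotProduct_single]
  simp [Pi.single_eq_of_ne hij, Pi.single_eq_of_ne hij.symm]
  ring

theorem mul_sq_one_div_sqrt_two_mul_inv_sqrt {p : ℝ} (hp : 0 < p) :
    p * (1 / √2 * (√p)⁻¹) ^ 2 = 1 / 2 := by
  rw [mul_pow, div_pow, inv_pow, Real.sq_sqrt zero_le_two, Real.sq_sqrt hp.le]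
  field_simp

theorem dotProduct_diagonal_mulVec_inv_sqrt_single_add_single {ι : Type*} [Fintype ι]
    [DecidableEq ι] {w : ι → ℝ} {i j : ι} (hij : i ≠ j) (hwi : 0 < w i) (hwj : 0 < w j)
    {s : ℝ} (hs : s ^ 2 = 1) {g : ι → ℝ}
    (hg : g = fun k => 1 / √2 * (√(w k))⁻¹ *
      ((Pi.single i (1 : ℝ) : ι → ℝ) k + s * (Pi.single j (1 : ℝ) : ι → ℝ) k))
    (u : ι → ℝ) :
    g ⬝ᵥ diagonal (fun k => w k * u k) *ᵥ g = (u i + u j) / 2 := by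
  have hg' : g = Pi.single i (1 / √2 * (√(w i))⁻¹) + Pi.single j (1 / √2 * (√(w j))⁻¹ * s) := by
    ext k
    rcases eq_or_ne k i with rfl | hki
    · simp [hg, hij]
    rcases eq_or_ne k j with rfl | hkj
    · simp [hg, hij.symm]
    · simp [hg, hki, hkj]
  rw [hg', single_add_single_dotProduct_diagonal_mulVec _ hij, mul_pow _ s, hs, mul_one]
  linear_combination u i * mul_sq_one_div_sqrt_two_mul_inv_sqrt hwi +
    u j * mul_sq_one_div_sqrt_two_mul_inv_sqrt hwj

theorem stmt_2_general {n : ℕ} (d : Fin (n + 2) → ℝ) (μ L γ : ℝ)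
    (hd : StrictMono d) (h0 : d 0 = μ) (hlast : d (Fin.last (n + 1)) = L)
    (hμpos : 0 < μ)
    (ψ : ℝ → ℝ) (hψ : ∀ i, 0 < ψ (d i))
    (s : ℝ) (hs : s = 1 ∨ s = -1)
    (b xk xs : Fin (n + 2) → ℝ)
    (A : Matrix (Fin (n + 2)) (Fin (n + 2)) ℝ) (hA : A = Matrix.diagonal d)
    (hxs : A.mulVec xs = b)
    (gk : Fin (n + 2) → ℝ)
    (hgkval : gk = fun i => (1 / Real.sqrt 2) * (Real.sqrt (ψ (d i)))⁻¹ *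
      ((Pi.single (0 : Fin (n + 2)) (1 : ℝ) : Fin (n + 2) → ℝ) i +
        s * (Pi.single (Fin.last (n + 1)) (1 : ℝ) : Fin (n + 2) → ℝ) i))
    (hgk : gk = A.mulVec xk - b)
    (ψA : Matrix (Fin (n + 2)) (Fin (n + 2)) ℝ)
    (hψA : ψA = Matrix.diagonal (fun i => ψ (d i)))
    (αk : ℝ) (hαk : αk = γ * (gk ⬝ᵥ ψA.mulVec gk) / (gk ⬝ᵥ (ψA * A).mulVec gk))
    (xk1 : Fin (n + 2) → ℝ) (hxk1 : xk1 = xk - αk • gk) :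
    (xk1 - xs) ⬝ᵥ (ψA * A).mulVec (xk1 - xs) =
      (1 - 4 * γ * (2 - γ) * μ * L / (L + μ) ^ 2) *
        ((xk - xs) ⬝ᵥ (ψA * A).mulVec (xk - xs)) := by
  subst hA hψA hαk hxk1
  have hdpos : ∀ k, 0 < d k := fun k => hμpos.trans_le (h0 ▸ hd.monotone (Fin.zero_le k))
  have hL : 0 < L := hlast ▸ hdpos _
  have hquad := dotProduct_diagonal_mulVec_inv_sqrt_single_add_single Fin.last_pos.ne (hψ 0)
    (hψ _) (by rcases hs with rfl | rfl <;> norm_num) hgkval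
  have hP : gk ⬝ᵥ diagonal (fun k => ψ (d k)) *ᵥ gk = 1 := by
    simpa using hquad 1
  have he : diagonal d *ᵥ (xk - xs) = gk := by rw [mulVec_sub, hxs, hgk]
  have hsymm : (diagonal (fun k => ψ (d k)) * diagonal d).IsSymm := by
    rw [diagonal_mul_diagonal]
    exact isSymm_diagonal _
  rw [sub_right_comm, dotProduct_mul_mulVec_sub_smul hsymm he,
    dotProduct_diagonal_mul_diagonal_mulVec_of_diagonal_mulVec_eq _ (fun k => (hdpos k).ne') he,
    diagonal_mul_diagonal, hquad, hquad, hP, h0, hlast]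
  field_simp
  ring

/-- If `g_k = (1/√2) ψ(A)^{-1/2}(ξ₁ ± ξₙ)`, equality holds in the linear
convergence rate of the family of gradient methods. -/
theorem stmt_2 {n : ℕ} (d : Fin (n + 2) → ℝ) (μ L γ : ℝ)
    (hd : StrictMono d) (h0 : d 0 = μ) (hlast : d (Fin.last (n + 1)) = L)
    (hμpos : 0 < μ)
    (ψ : ℝ → ℝ) (hψ : ∀ i, 0 < ψ (d i))
    (hγ : 0 < γ) (hγ1 : γ ≤ 1)
    (s : ℝ) (hs : s = 1 ∨ s = -1)
    (b xk xs : Fin (n + 2) → ℝ)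
    (A : Matrix (Fin (n + 2)) (Fin (n + 2)) ℝ) (hA : A = Matrix.diagonal d)
    (hxs : A.mulVec xs = b)
    (gk : Fin (n + 2) → ℝ)
    (hgkval : gk = fun i => (1 / Real.sqrt 2) * (Real.sqrt (ψ (d i)))⁻¹ *
      ((Pi.single (0 : Fin (n + 2)) (1 : ℝ) : Fin (n + 2) → ℝ) i +
        s * (Pi.single (Fin.last (n + 1)) (1 : ℝ) : Fin (n + 2) → ℝ) i))
    (hgk : gk = A.mulVec xk - b)
    (ψA : Matrix (Fin (n + 2)) (Fin (n + 2)) ℝ)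
    (hψA : ψA = Matrix.diagonal (fun i => ψ (d i)))
    (αk : ℝ) (hαk : αk = γ * (gk ⬝ᵥ ψA.mulVec gk) / (gk ⬝ᵥ (ψA * A).mulVec gk))
    (xk1 : Fin (n + 2) → ℝ) (hxk1 : xk1 = xk - αk • gk) :
    (xk1 - xs) ⬝ᵥ (ψA * A).mulVec (xk1 - xs) =
      (1 - 4 * γ * (2 - γ) * μ * L / (L + μ) ^ 2) *
        ((xk - xs) ⬝ᵥ (ψA * A).mulVec (xk - xs)) :=
  stmt_2_general d μ L γ hd h0 hlast hμpos ψ hψ s hs b xk xs A hA hxs gk hgkval hgk ψA hψA αk hαk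
    xk1 hxk1
end

section
/- For the quadratic f(x) = ½xᵀAx - bᵀx with A = diag(λ₁,...,λₙ), 0 < μ = λ₁ ≤ ... ≤ λₙ = L, minimizer x*, the gradient step x_{k+1} = x_k - α_k g_k with the Polyak stepsize α_k = γ (g_kᵀA⁻¹g_k)/(g_kᵀg_k), γ ∈ (0,1], satisfies ‖x_{k+1} - x*‖² ≤ (1 - 4γ(2-γ)μL/(L+μ)²)‖x_k - x*‖². -/
open Matrix

/-!
Write `e = x_k - x*`, so that `g_k = A e` and, since `A` is invertible, `g_kᵀA⁻¹g_k = eᵀA e`.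
Expanding the square, the Polyak step decreases `‖e‖²` by exactly
`γ (2 - γ) (eᵀAe)² / ‖Ae‖²`, and the Kantorovich inequality
`4 μ L ‖e‖² ‖Ae‖² ≤ (L + μ)² (eᵀAe)²` bounds this decrease from below by a multiple of `‖e‖²`.
-/

theorem dotProduct_sub_smul_self {K ι : Type*} [Field K] [Fintype ι] (γ : K) {e g : ι → K}
    (hg : g ⬝ᵥ g ≠ 0) :
    (e - (γ * (e ⬝ᵥ g) / (g ⬝ᵥ g)) • g) ⬝ᵥ (e - (γ * (e ⬝ᵥ g) / (g ⬝ᵥ g)) • g) =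
      e ⬝ᵥ e - γ * (2 - γ) * (e ⬝ᵥ g) ^ 2 / (g ⬝ᵥ g) := by
  simp only [sub_dotProduct, dotProduct_sub, smul_dotProduct, dotProduct_smul, smul_eq_mul,
    dotProduct_comm g e]
  field_simp
  ring

section Kantorovich

variable {ι : Type*} [Fintype ι] [DecidableEq ι] {d : ι → ℝ} {μ L : ℝ}

/-- Summing `(d i - μ) (L - d i) (e i)² ≥ 0`. -/
theorem mul_dotProduct_self_le_of_forall_mem_Icc (hd : ∀ i, μ ≤ d i ∧ d i ≤ L) (e : ι → ℝ) :
    μ * L * (e ⬝ᵥ e) ≤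
      (μ + L) * (e ⬝ᵥ (diagonal d *ᵥ e)) - (diagonal d *ᵥ e) ⬝ᵥ (diagonal d *ᵥ e) := by
  simp only [dotProduct, mulVec_diagonal, Finset.mul_sum, ← Finset.sum_sub_distrib]
  refine Finset.sum_le_sum fun i _ => ?_
  nlinarith [mul_nonneg (mul_nonneg (sub_nonneg.2 (hd i).1) (sub_nonneg.2 (hd i).2))
    (mul_self_nonneg (e i))]

theorem kantorovich_diagonal (hd : ∀ i, μ ≤ d i ∧ d i ≤ L) (e : ι → ℝ) :
    4 * μ * L * (e ⬝ᵥ e) * ((diagonal d *ᵥ e) ⬝ᵥ (diagonal d *ᵥ e)) ≤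
      (L + μ) ^ 2 * (e ⬝ᵥ (diagonal d *ᵥ e)) ^ 2 := by
  set P := e ⬝ᵥ (diagonal d *ᵥ e)
  set Q := (diagonal d *ᵥ e) ⬝ᵥ (diagonal d *ᵥ e)
  have hQ : 0 ≤ Q := Fintype.sum_nonneg fun _ => mul_self_nonneg _
  have hbound := mul_dotProduct_self_le_of_forall_mem_Icc hd e
  -- `4 ((μ + L) P - Q) Q ≤ ((μ + L) P)²` is AM-GM.
  nlinarith [mul_le_mul_of_nonneg_right hbound hQ, sq_nonneg ((μ + L) * P - 2 * Q)]

end Kantorovich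

theorem sub_mul_sq_div_le_of_kantorovich {S P Q μ L γ : ℝ}
    (hK : 4 * μ * L * S * Q ≤ (L + μ) ^ 2 * P ^ 2) (hQ : 0 < Q) (hγ : 0 ≤ γ) (hγ2 : γ ≤ 2) :
    S - γ * (2 - γ) * P ^ 2 / Q ≤ (1 - 4 * γ * (2 - γ) * μ * L / (L + μ) ^ 2) * S := by
  have hrate : 4 * μ * L * S / (L + μ) ^ 2 ≤ P ^ 2 / Q :=
    div_le_of_le_mul₀ (sq_nonneg _) (div_nonneg (sq_nonneg _) hQ.le) <| by
      rw [div_mul_eq_mul_div, le_div_iff₀ hQ]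
      linarith
  have hdecrease := mul_le_mul_of_nonneg_left hrate (mul_nonneg hγ (sub_nonneg.2 hγ2))
  calc S - γ * (2 - γ) * P ^ 2 / Q
      = S - γ * (2 - γ) * (P ^ 2 / Q) := by ring
    _ ≤ S - γ * (2 - γ) * (4 * μ * L * S / (L + μ) ^ 2) := by linarith
    _ = (1 - 4 * γ * (2 - γ) * μ * L / (L + μ) ^ 2) * S := by ring

theorem stmt_5_general {n : ℕ} (d : Fin n → ℝ) (μ L γ : ℝ)
    (hμpos : 0 < μ) (hbd : ∀ i, μ ≤ d i ∧ d i ≤ L)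
    (hγ : 0 < γ) (hγ1 : γ ≤ 1)
    (b xk xs : Fin n → ℝ)
    (A : Matrix (Fin n) (Fin n) ℝ) (hA : A = Matrix.diagonal d)
    (hxs : A.mulVec xs = b)
    (gk : Fin n → ℝ) (hgk : gk = A.mulVec xk - b) (hgk0 : gk ≠ 0)
    (αk : ℝ) (hαk : αk = γ * (gk ⬝ᵥ A⁻¹.mulVec gk) / (gk ⬝ᵥ gk))
    (xk1 : Fin n → ℝ) (hxk1 : xk1 = xk - αk • gk) :
    (xk1 - xs) ⬝ᵥ (xk1 - xs) ≤
      (1 - 4 * γ * (2 - γ) * μ * L / (L + μ) ^ 2) * ((xk - xs) ⬝ᵥ (xk - xs)) := by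
  set e := xk - xs
  have hge : gk = A *ᵥ e := by rw [hgk, ← hxs, mulVec_sub]
  have hdet : IsUnit A.det := by
    rw [hA, det_diagonal, isUnit_iff_ne_zero, Finset.prod_ne_zero_iff]
    exact fun i _ => (hμpos.trans_le (hbd i).1).ne'
  have hpolyak : gk ⬝ᵥ A⁻¹ *ᵥ gk = e ⬝ᵥ gk := by
    rw [hge, mulVec_mulVec, nonsing_inv_mul A hdet, one_mulVec, dotProduct_comm]
  have hQ : 0 < gk ⬝ᵥ gk :=
    (Fintype.sum_nonneg fun _ => mul_self_nonneg _).lt_of_ne' (dotProduct_self_eq_zero.not.2 hgk0)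
  have hstep : xk1 - xs = e - αk • gk := by rw [hxk1, sub_right_comm]
  rw [hstep, hαk, hpolyak, dotProduct_sub_smul_self γ hQ.ne']
  have hK := kantorovich_diagonal hbd e
  rw [← hA, ← hge] at hK
  exact sub_mul_sq_div_le_of_kantorovich hK hQ hγ.le (by linarith)

/-- Linear convergence in iterates of the gradient method with the Polyak
stepsize `α_k = γ (g_kᵀA⁻¹g_k)/(g_kᵀg_k)` on a quadratic with diagonal Hessian
with eigenvalues in `[μ, L]`. -/
theorem stmt_5 {n : ℕ} (d : Fin n → ℝ) (μ L γ : ℝ)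
    (hμpos : 0 < μ) (hbd : ∀ i, μ ≤ d i ∧ d i ≤ L)
    (hμatt : ∃ i, d i = μ) (hLatt : ∃ i, d i = L)
    (hγ : 0 < γ) (hγ1 : γ ≤ 1)
    (b xk xs : Fin n → ℝ)
    (A : Matrix (Fin n) (Fin n) ℝ) (hA : A = Matrix.diagonal d)
    (hxs : A.mulVec xs = b)
    (gk : Fin n → ℝ) (hgk : gk = A.mulVec xk - b) (hgk0 : gk ≠ 0)
    (αk : ℝ) (hαk : αk = γ * (gk ⬝ᵥ A⁻¹.mulVec gk) / (gk ⬝ᵥ gk))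
    (xk1 : Fin n → ℝ) (hxk1 : xk1 = xk - αk • gk) :
    (xk1 - xs) ⬝ᵥ (xk1 - xs) ≤
      (1 - 4 * γ * (2 - γ) * μ * L / (L + μ) ^ 2) * ((xk - xs) ⬝ᵥ (xk - xs)) :=
  stmt_5_general d μ L γ hμpos hbd hγ hγ1 b xk xs A hA hxs gk hgk hgk0 αk hαk xk1 hxk1
end

section
/- Let f: ℝⁿ → ℝ be L-smooth and μ-strongly convex with 0 < μ < L. Then for all x, y ∈ ℝⁿ: f(x) - f(y) + ∇f(x)ᵀ(y-x) + (1/(2(1-μ/L)))·(μ‖x-y‖² - (2μ/L)(∇f(x)-∇f(y))ᵀ(x-y) + (1/L)‖∇f(x)-∇f(y)‖²) ≤ 0. -/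
/-!
Subtracting the smoothness upper bound at `(y, z)` from the strong-convexity lower bound at
`(x, z)` leaves a concave quadratic in the step `w = z - y`; its maximizer
`w = (g x - g y - μ (x - y)) / (L - μ)` gives
`f y ≥ f x + ⟪g x, y - x⟫ + μ/2 ‖x - y‖² + ‖g x - g y - μ (x - y)‖² / (2 (L - μ))`,
which is the claimed inequality once the square is expanded.
-/

open RealInnerProductSpace

section QuadraticBounds

variable {E : Type*} [NormedAddCommGroup E] [InnerProductSpace ℝ E]
  {f : E → ℝ} {g : E → E} {μ L : ℝ}

theorem add_inner_sub_norm_sq_le_of_quadratic_bounds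
    (hsmooth : ∀ x y, f y ≤ f x + ⟪g x, y - x⟫ + L / 2 * ‖x - y‖ ^ 2)
    (hconv : ∀ x y, f y ≥ f x + ⟪g x, y - x⟫ + μ / 2 * ‖x - y‖ ^ 2) (x y w : E) :
    f x + ⟪g x, y - x⟫ + μ / 2 * ‖x - y‖ ^ 2 +
      (⟪g x - g y - μ • (x - y), w⟫ - (L - μ) / 2 * ‖w‖ ^ 2) ≤ f y := by
  have hlower := hconv x (y + w)
  have hupper := hsmooth y (y + w)
  rw [show y + w - x = (y - x) + w by abel, show x - (y + w) = (x - y) - w by abel,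
    inner_add_right, norm_sub_sq_real] at hlower
  rw [show y + w - y = w by abel, show y - (y + w) = -w by abel, norm_neg] at hupper
  rw [inner_sub_left, inner_sub_left, real_inner_smul_left]
  linarith

theorem add_norm_sq_div_le_of_quadratic_bounds (hμL : μ < L)
    (hsmooth : ∀ x y, f y ≤ f x + ⟪g x, y - x⟫ + L / 2 * ‖x - y‖ ^ 2)
    (hconv : ∀ x y, f y ≥ f x + ⟪g x, y - x⟫ + μ / 2 * ‖x - y‖ ^ 2) (x y : E) :
    f x + ⟪g x, y - x⟫ + μ / 2 * ‖x - y‖ ^ 2 +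
      ‖g x - g y - μ • (x - y)‖ ^ 2 / (2 * (L - μ)) ≤ f y := by
  set d := g x - g y - μ • (x - y)
  have hgap : L - μ ≠ 0 := (sub_pos.mpr hμL).ne'
  have hopt : ⟪d, (L - μ)⁻¹ • d⟫ - (L - μ) / 2 * ‖(L - μ)⁻¹ • d‖ ^ 2 =
      ‖d‖ ^ 2 / (2 * (L - μ)) := by
    rw [real_inner_smul_right, real_inner_self_eq_norm_sq, norm_smul, mul_pow,
      Real.norm_eq_abs, sq_abs]
    field_simp
    ring
  simpa only [d, hopt] using
    add_inner_sub_norm_sq_le_of_quadratic_bounds hsmooth hconv x y ((L - μ)⁻¹ • d)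

theorem interpolation_quadratic_form_eq (hL : L ≠ 0) (hLμ : L - μ ≠ 0) (u v : E) :
    1 / (2 * (1 - μ / L)) * (μ * ‖u‖ ^ 2 - 2 * μ / L * ⟪v, u⟫ + 1 / L * ‖v‖ ^ 2) =
      μ / 2 * ‖u‖ ^ 2 + ‖v - μ • u‖ ^ 2 / (2 * (L - μ)) := by
  rw [norm_sub_sq_real, real_inner_smul_right, norm_smul, mul_pow, Real.norm_eq_abs, sq_abs,
    real_inner_comm]
  have hden : 1 - μ / L ≠ 0 := by
    rw [one_sub_div hL]; exact div_ne_zero hLμ hL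
  field_simp
  ring

end QuadraticBounds

theorem stmt_7_general {n : ℕ} (μ L : ℝ) (hμ : 0 < μ) (hμL : μ < L)
    (f : EuclideanSpace ℝ (Fin n) → ℝ)
    (g : EuclideanSpace ℝ (Fin n) → EuclideanSpace ℝ (Fin n))
    (hsmooth : ∀ x y, f y ≤ f x + ⟪g x, y - x⟫ + L / 2 * ‖x - y‖ ^ 2)
    (hconv : ∀ x y, f y ≥ f x + ⟪g x, y - x⟫ + μ / 2 * ‖x - y‖ ^ 2) :
    ∀ x y, f x - f y + ⟪g x, y - x⟫ + 1 / (2 * (1 - μ / L)) *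
      (μ * ‖x - y‖ ^ 2 - 2 * μ / L * ⟪g x - g y, x - y⟫ +
        1 / L * ‖g x - g y‖ ^ 2) ≤ 0 := by
  intro x y
  have hL : L ≠ 0 := (hμ.trans hμL).ne'
  rw [interpolation_quadratic_form_eq hL (sub_pos.mpr hμL).ne']
  linarith [add_norm_sq_div_le_of_quadratic_bounds hμL hsmooth hconv x y]

/-- Interpolation inequality for `L`-smooth, `μ`-strongly convex functions
(Theorem 4 of Taylor–Hendrickx–Glineur), with `g = ∇f`. -/
theorem stmt_7 {n : ℕ} (μ L : ℝ) (hμ : 0 < μ) (hμL : μ < L)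
    (f : EuclideanSpace ℝ (Fin n) → ℝ)
    (g : EuclideanSpace ℝ (Fin n) → EuclideanSpace ℝ (Fin n))
    (hgrad : ∀ x, HasGradientAt f (g x) x)
    (hsmooth : ∀ x y, f y ≤ f x + ⟪g x, y - x⟫ + L / 2 * ‖x - y‖ ^ 2)
    (hconv : ∀ x y, f y ≥ f x + ⟪g x, y - x⟫ + μ / 2 * ‖x - y‖ ^ 2) :
    ∀ x y, f x - f y + ⟪g x, y - x⟫ + 1 / (2 * (1 - μ / L)) *
      (μ * ‖x - y‖ ^ 2 - 2 * μ / L * ⟪g x - g y, x - y⟫ +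
        1 / L * ‖g x - g y‖ ^ 2) ≤ 0 :=
  stmt_7_general μ L hμ hμL f g hsmooth hconv
end

section
/- Let f be L-smooth and μ-strongly convex on ℝⁿ with 0 < μ < L, with minimizer x* and minimum value f*. Let x_{k+1} = x_k - α_k g_k where g_k = ∇f(x_k) and α_k is obtained by exact line search, i.e., α_k minimizes α ↦ f(x_k - α g_k) over α > 0 (so g_{k+1}ᵀg_k = 0). Then f(x_{k+1}) - f* ≤ ((L-μ)/(L+μ))² (f(x_k) - f*). -/
/-!
The two quadratic bounds together imply, for every pair of points, the interpolation inequality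
`‖g x - g y - μ (x - y)‖² ≤ 2 (L - μ) (f x - f y - ⟪g y, x - y⟫ - μ/2 ‖x - y‖²)`.
Write it for the pairs `(x_k, x_{k+1})`, `(x*, x_k)` and `(x*, x_{k+1})`, where `g x* = 0`, and
use `⟪g_{k+1}, g_k⟫ = 0`. The sum of the three slacks with weights `(L - μ)(L + μ)/2`, `μ(L - μ)`,
`μ(L + μ)` is then `(L - μ)((L - μ)² (f_k - f*) - (L + μ)² (f_{k+1} - f*))` minus half of
`‖2μL (x_k - x*) - (L - μ + μα(L + μ)) g_k - (L + μ) g_{k+1}‖² + μ(L - μ)(α(L + μ) - 2)² ‖g_k‖²`.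
This certificate is due to de Klerk, Glineur and Taylor.
-/

open RealInnerProductSpace

variable {E : Type*} [NormedAddCommGroup E] [InnerProductSpace ℝ E] {f : E → ℝ} {g : E → E}
  {μ L : ℝ}

lemma eq_zero_of_forall_le_of_quadratic_upper_bound (hL : 0 < L)
    (hsmooth : ∀ x y, f y ≤ f x + ⟪g x, y - x⟫ + L / 2 * ‖x - y‖ ^ 2)
    {xs : E} (hmin : ∀ y, f xs ≤ f y) : g xs = 0 := by
  have h := (hmin (xs - L⁻¹ • g xs)).trans (hsmooth xs _)
  simp only [sub_sub_cancel_left, sub_sub_cancel, inner_neg_right, real_inner_smul_right,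
    real_inner_self_eq_norm_sq, norm_smul, norm_inv, Real.norm_of_nonneg hL.le] at h
  have : ‖g xs‖ ^ 2 ≤ 0 := by
    field_simp at h
    linarith
  simpa using this

/-- Both bounds are evaluated at `x - w / (L - μ)`, where `w = g x - g y - μ (x - y)`. -/
lemma interpolation_inequality (hμL : μ < L)
    (hsmooth : ∀ x y, f y ≤ f x + ⟪g x, y - x⟫ + L / 2 * ‖x - y‖ ^ 2)
    (hconv : ∀ x y, f y ≥ f x + ⟪g x, y - x⟫ + μ / 2 * ‖x - y‖ ^ 2) (x y : E) :
    ‖g x - g y - μ • (x - y)‖ ^ 2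
      ≤ 2 * (L - μ) * (f x - f y - ⟪g y, x - y⟫ - μ / 2 * ‖x - y‖ ^ 2) := by
  set w := g x - g y - μ • (x - y)
  set t := (L - μ)⁻¹
  have ht : (L - μ) * t = 1 := mul_inv_cancel₀ (sub_ne_zero.2 hμL.ne')
  have hw : ⟪g x, w⟫ - ⟪g y, w⟫ - μ * ⟪x - y, w⟫ = ‖w‖ ^ 2 := by
    rw [← real_inner_self_eq_norm_sq, ← real_inner_smul_left, ← inner_sub_left, ← inner_sub_left]
  have hupper := hsmooth x (x - t • w)
  have hlower := hconv y (x - t • w)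
  rw [sub_sub_cancel_left, sub_sub_cancel, inner_neg_right, real_inner_smul_right, norm_smul,
    mul_pow, Real.norm_eq_abs, sq_abs] at hupper
  rw [norm_sub_rev y, sub_right_comm, inner_sub_right, norm_sub_sq_real, real_inner_smul_right,
    inner_smul_right, norm_smul, mul_pow, Real.norm_eq_abs, sq_abs] at hlower
  linear_combination 2 * (L - μ) * (hupper + hlower) - 2 * (L - μ) * t * hw
    + ‖w‖ ^ 2 * ((L - μ) * t - 1) * ht

lemma exact_line_search_contraction (hμ : 0 < μ) (hμL : μ < L)
    (hsmooth : ∀ x y, f y ≤ f x + ⟪g x, y - x⟫ + L / 2 * ‖x - y‖ ^ 2)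
    (hconv : ∀ x y, f y ≥ f x + ⟪g x, y - x⟫ + μ / 2 * ‖x - y‖ ^ 2)
    {xs : E} (hxs : g xs = 0) {x : E} {α : ℝ} (horth : ⟪g (x - α • g x), g x⟫ = 0) :
    (L + μ) ^ 2 * (f (x - α • g x) - f xs) ≤ (L - μ) ^ 2 * (f x - f xs) := by
  set x₁ := x - α • g x
  have h₀₁ := interpolation_inequality hμL hsmooth hconv x x₁
  have hopt₀ := interpolation_inequality hμL hsmooth hconv xs x
  have hopt₁ := interpolation_inequality hμL hsmooth hconv xs x₁
  have hv := real_inner_self_nonneg (x :=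
    (2 * μ * L) • (x - xs) - ((L - μ) + μ * α * (L + μ)) • g x - (L + μ) • g x₁)
  rw [show x - x₁ = α • g x from sub_sub_cancel _ _] at h₀₁
  rw [show xs - x = -(x - xs) from (neg_sub _ _).symm, hxs] at hopt₀
  rw [show xs - x₁ = α • g x - (x - xs) by simp only [x₁]; abel, hxs] at hopt₁
  generalize x - xs = d at hopt₀ hopt₁ hv
  generalize g x = g₀ at *
  generalize g x₁ = g₁ at *
  have horth' : ⟪g₀, g₁⟫ = 0 := by rwa [real_inner_comm]
  simp only [← real_inner_self_eq_norm_sq, inner_sub_left, inner_sub_right, inner_neg_left,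
    inner_neg_right, inner_smul_left, inner_smul_right, inner_zero_left, inner_zero_right,
    RCLike.conj_to_real] at h₀₁ hopt₀ hopt₁ hv
  simp only [real_inner_comm d, horth, horth'] at h₀₁ hopt₀ hopt₁ hv
  have hK : 0 < L - μ := sub_pos.2 hμL
  have hS : 0 < L + μ := by linarith
  refine le_of_mul_le_mul_left ?_ hK
  linear_combination
    mul_le_mul_of_nonneg_left h₀₁ (by positivity : (0 : ℝ) ≤ (L - μ) * (L + μ) / 2)
    + mul_le_mul_of_nonneg_left hopt₀ (by positivity : (0 : ℝ) ≤ μ * (L - μ))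
    + mul_le_mul_of_nonneg_left hopt₁ (by positivity : (0 : ℝ) ≤ μ * (L + μ)) + hv / 2
    + mul_nonneg (by positivity : (0 : ℝ) ≤ μ * (L - μ) * (α * (L + μ) - 2) ^ 2 / 2)
      (real_inner_self_nonneg (x := g₀))

theorem stmt_8_general {n : ℕ} (μ L : ℝ) (hμ : 0 < μ) (hμL : μ < L)
    (f : EuclideanSpace ℝ (Fin n) → ℝ)
    (g : EuclideanSpace ℝ (Fin n) → EuclideanSpace ℝ (Fin n))
    (hsmooth : ∀ x y, f y ≤ f x + ⟪g x, y - x⟫ + L / 2 * ‖x - y‖ ^ 2)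
    (hconv : ∀ x y, f y ≥ f x + ⟪g x, y - x⟫ + μ / 2 * ‖x - y‖ ^ 2)
    (xs : EuclideanSpace ℝ (Fin n)) (hmin : ∀ y, f xs ≤ f y)
    (xk : EuclideanSpace ℝ (Fin n)) (α : ℝ)
    (xk1 : EuclideanSpace ℝ (Fin n)) (hxk1 : xk1 = xk - α • g xk)
    (horth : ⟪g xk1, g xk⟫ = 0) :
    f xk1 - f xs ≤ ((L - μ) / (L + μ)) ^ 2 * (f xk - f xs) := by
  subst hxk1
  have hxs := eq_zero_of_forall_le_of_quadratic_upper_bound (hμ.trans hμL) hsmooth hmin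
  have hstep := exact_line_search_contraction hμ hμL hsmooth hconv hxs horth
  have hS : 0 < L + μ := by linarith
  rw [div_pow, div_mul_eq_mul_div, le_div_iff₀ (by positivity)]
  linarith

/-- Worst-case rate of the gradient method with exact line search on
`L`-smooth, `μ`-strongly convex functions:
`f(x_{k+1}) - f* ≤ ((L-μ)/(L+μ))² (f(x_k) - f*)`. -/
theorem stmt_8 {n : ℕ} (μ L : ℝ) (hμ : 0 < μ) (hμL : μ < L)
    (f : EuclideanSpace ℝ (Fin n) → ℝ)
    (g : EuclideanSpace ℝ (Fin n) → EuclideanSpace ℝ (Fin n))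
    (hgrad : ∀ x, HasGradientAt f (g x) x)
    (hsmooth : ∀ x y, f y ≤ f x + ⟪g x, y - x⟫ + L / 2 * ‖x - y‖ ^ 2)
    (hconv : ∀ x y, f y ≥ f x + ⟪g x, y - x⟫ + μ / 2 * ‖x - y‖ ^ 2)
    (xs : EuclideanSpace ℝ (Fin n)) (hmin : ∀ y, f xs ≤ f y)
    (xk : EuclideanSpace ℝ (Fin n)) (α : ℝ) (hα : 0 < α)
    (hls : ∀ β : ℝ, 0 < β → f (xk - α • g xk) ≤ f (xk - β • g xk))
    (xk1 : EuclideanSpace ℝ (Fin n)) (hxk1 : xk1 = xk - α • g xk)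
    (horth : ⟪g xk1, g xk⟫ = 0) :
    f xk1 - f xs ≤ ((L - μ) / (L + μ)) ^ 2 * (f xk - f xs) :=
  stmt_8_general μ L hμ hμL f g hsmooth hconv xs hmin xk α xk1 hxk1 horth
end

section
/- Let 0 < μ < L and set ζ₁ = (L-μ)/(2μ), ζ₂ = (L-μ)/(L+μ), ζ₃ = 1. Then ζ₂ = (2μ/(L+μ))ζ₁, ζ₃ = (2μ/(L-μ))ζ₁, and β₂ - β₄²/β₁ = 0 and β₃ - β₅²/β₁ = 0, where β₁ = μ(ζ₁+ζ₃) - μζ₁²/(ζ₁+ζ₂), β₂ = (L-μ)(μζ₁² - Lζ₂²)/(μL²(ζ₁+ζ₂)), β₃ = (ζ₁+ζ₃)/L - μ(ζ₁+ζ₂)δ², β₄ = (L-μ)ζ₁ζ₂/(L(ζ₁+ζ₂)), β₅ = μδζ₂ - ζ₃, and δ = (L+μ)/(L(L+3μ)). -/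
/-- Algebraic identities for the multipliers `ζ₁ = (L-μ)/(2μ)`,
`ζ₂ = (L-μ)/(L+μ)`, `ζ₃ = 1` and `δ = (L+μ)/(L(L+3μ))` used in the analytic
worst-case proof for exact line search. -/
theorem stmt_12 (μ L : ℝ) (hμ : 0 < μ) (hμL : μ < L)
    (ζ₁ ζ₂ ζ₃ δ β₁ β₂ β₃ β₄ β₅ : ℝ)
    (hζ₁ : ζ₁ = (L - μ) / (2 * μ))
    (hζ₂ : ζ₂ = (L - μ) / (L + μ))
    (hζ₃ : ζ₃ = 1)
    (hδ : δ = (L + μ) / (L * (L + 3 * μ)))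
    (hβ₁ : β₁ = μ * (ζ₁ + ζ₃) - μ * ζ₁ ^ 2 / (ζ₁ + ζ₂))
    (hβ₂ : β₂ = (L - μ) * (μ * ζ₁ ^ 2 - L * ζ₂ ^ 2) / (μ * L ^ 2 * (ζ₁ + ζ₂)))
    (hβ₃ : β₃ = (ζ₁ + ζ₃) / L - μ * (ζ₁ + ζ₂) * δ ^ 2)
    (hβ₄ : β₄ = (L - μ) * ζ₁ * ζ₂ / (L * (ζ₁ + ζ₂)))
    (hβ₅ : β₅ = μ * δ * ζ₂ - ζ₃) :
    ζ₂ = 2 * μ / (L + μ) * ζ₁ ∧ ζ₃ = 2 * μ / (L - μ) * ζ₁ ∧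
      β₂ - β₄ ^ 2 / β₁ = 0 ∧ β₃ - β₅ ^ 2 / β₁ = 0 := by
  have hμ0 : μ ≠ 0 := ne_of_gt hμ
  have hL0 : L ≠ 0 := ne_of_gt (hμ.trans hμL)
  have hLm : (0:ℝ) < L - μ := sub_pos.mpr hμL
  have hLp : (0:ℝ) < L + μ := by linarith
  have hL3 : (0:ℝ) < L + 3 * μ := by linarith
  have hL30 : L + 3 * μ ≠ 0 := ne_of_gt hL3
  have hLp0 : L + μ ≠ 0 := ne_of_gt hLp
  have hL3b : L + μ * 3 ≠ 0 := ne_of_gt (by linarith)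
  have hs : ζ₁ + ζ₂ = (L - μ) * (L + 3 * μ) / (2 * μ * (L + μ)) := by
    rw [hζ₁, hζ₂]; field_simp; ring
  have hs0 : ζ₁ + ζ₂ ≠ 0 := by
    rw [hs]; positivity
  have hβ₁' : β₁ = 2 * μ * (L + μ) / (L + 3 * μ) := by
    rw [hβ₁, hζ₁, hζ₂, hζ₃]
    rw [hζ₁, hζ₂] at hs0
    field_simp
    ring_nf
  have hβ₁0 : β₁ ≠ 0 := by rw [hβ₁']; positivity
  refine ⟨by rw [hζ₁, hζ₂]; field_simp, by rw [hζ₁, hζ₃]; field_simp, ?_, ?_⟩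
  · rw [sub_eq_zero, eq_div_iff hβ₁0, hβ₂, hβ₄, hβ₁', hζ₁, hζ₂]
    rw [hζ₁, hζ₂] at hs0
    field_simp
    ring_nf
  · rw [sub_eq_zero, eq_div_iff hβ₁0, hβ₃, hβ₅, hβ₁', hζ₁, hζ₂, hζ₃, hδ]
    rw [hζ₁, hζ₂] at hs0
    field_simp
    ring_nf
end

section
/- Let 0 < μ < L and γ ∈ (0,1]. Suppose α > 0 satisfies γ(1-μα) - (L-μ)α ≥ 0. Define h(α) = α + ((1-γ)(L-μ)α + γ(1-μα))/(2(L-μ)α) · ζ₁ with ζ₁ = 8γ(L-μ)/(L+μ)². Then h attains its minimum over α > 0 at α = √(γζ₁/(2(L-μ))) = 2γ/(L+μ), and μ·h(2γ/(L+μ)) = 4γ(2-γ)μL/(L+μ)², so that 1 - μ h(2γ/(L+μ)) = 1 - 4γ(2-γ)μL/(L+μ)². -/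
/-- Key computation in Case 2 of the Polyak-stepsize worst-case analysis:
with `ζ₁ = 8γ(L-μ)/(L+μ)²`, the function
`h(α) = α + ((1-γ)(L-μ)α + γ(1-μα))ζ₁/(2(L-μ)α)` attains its minimum over
`α > 0` at `α = √(γζ₁/(2(L-μ))) = 2γ/(L+μ)`, and
`μ h(2γ/(L+μ)) = 4γ(2-γ)μL/(L+μ)²`. -/
theorem stmt_15 (μ L γ : ℝ) (hμ : 0 < μ) (hμL : μ < L) (hγ : 0 < γ)
    (hγ1 : γ ≤ 1)
    (α₀ : ℝ) (hα₀ : 0 < α₀) (hcase : γ * (1 - μ * α₀) - (L - μ) * α₀ ≥ 0)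
    (ζ₁ : ℝ) (hζ₁ : ζ₁ = 8 * γ * (L - μ) / (L + μ) ^ 2)
    (h : ℝ → ℝ)
    (hh : ∀ α, h α = α +
      ((1 - γ) * (L - μ) * α + γ * (1 - μ * α)) / (2 * (L - μ) * α) * ζ₁) :
    Real.sqrt (γ * ζ₁ / (2 * (L - μ))) = 2 * γ / (L + μ) ∧
    (∀ α : ℝ, 0 < α → h (2 * γ / (L + μ)) ≤ h α) ∧
    μ * h (2 * γ / (L + μ)) = 4 * γ * (2 - γ) * μ * L / (L + μ) ^ 2 := by
  have hLμ : 0 < L - μ := by linarith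
  have hLp : 0 < L + μ := by linarith
  have hαs : 0 < 2 * γ / (L + μ) := by positivity
  have key : γ * ζ₁ / (2 * (L - μ)) = (2 * γ / (L + μ)) ^ 2 := by
    rw [hζ₁]; field_simp; ring
  refine ⟨?_, ?_, ?_⟩
  · rw [key, Real.sqrt_sq hαs.le]
  · intro α hα
    rw [hh, hh]
    have h1 : (2 * (L - μ) * α) ≠ 0 := by positivity
    have h2 : (2 * (L - μ) * (2 * γ / (L + μ))) ≠ 0 := by positivity
    rw [hζ₁, ← sub_nonneg]
    have hkey : α + ((1 - γ) * (L - μ) * α + γ * (1 - μ * α)) / (2 * (L - μ) * α) *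
        (8 * γ * (L - μ) / (L + μ) ^ 2) -
        (2 * γ / (L + μ) +
          ((1 - γ) * (L - μ) * (2 * γ / (L + μ)) + γ * (1 - μ * (2 * γ / (L + μ)))) /
            (2 * (L - μ) * (2 * γ / (L + μ))) * (8 * γ * (L - μ) / (L + μ) ^ 2)) =
        (α * (L + μ) - 2 * γ) ^ 2 / (α * (L + μ) ^ 2) := by
      field_simp
      ring
    rw [hkey]
    positivity
  · rw [hh, hζ₁]
    field_simp
    ring
end
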